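/- (Discretization intertwines the Hartley transforms.) Let N ≥ 1 be an integer and let f : ℝ → ℝ be a Schwartz function with Hartley transform g = 𝓗f. Define F(j) := ∑_{k∈ℤ} f(√(2π/N)(kN + j)) and G(j) := ∑_{k∈ℤ} g(√(2π/N)(kN + j)) for j = 0, …, N−1. Then G is the finite Hartley transform of F: G(k) = (1/√N) ∑_{j=0}^{N−1} cas(2πkj/N) F(j) for every k = 0, …, N−1. -/

import Mathlib

/-!
Viewing `f` as a complex Schwartz function `φ`, the Hartley transform is `Re + Im` of the Fourier
transform, because `(Re + Im) e^{-iθ} = cas θ`. Poisson summation for the dilated transform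
`y ↦ 𝓕 φ (y / a)`, with the sum over `ℤ` then split into residue classes mod `N`, shows that the
samples of `𝓕 φ` along `(k + Nℤ) / (aN)` add up to `a` times the discrete Fourier transform of the
periodized samples `j ↦ ∑ₘ φ (a (mN + j))`. Applying `Re + Im` turns the discrete Fourier kernel
into `cas`, and for `a = √(2π/N)` the normalizations of the two transforms match.
-/

/-- The cas function, `cas x = cos x - sin x`. -/
noncomputable def cas (x : ℝ) : ℝ := Real.cos x - Real.sin x

/-- The Hartley transform `(𝓗 f)(λ) = (1/√(2π)) ∫ f(x) cas(λ x) dx`. -/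
noncomputable def hartley (f : ℝ → ℝ) (l : ℝ) : ℝ :=
    (1 / Real.sqrt (2 * Real.pi)) * ∫ x : ℝ, f x * cas (l * x)

open MeasureTheory FourierTransform Real SchwartzMap

lemma tsum_int_eq_sum_range_tsum {E : Type*} [NormedAddCommGroup E] [CompleteSpace E] {h : ℤ → E}
    (hh : Summable h) (N : ℕ) [NeZero N] :
    ∑' n, h n = ∑ j ∈ Finset.range N, ∑' m : ℤ, h (m * N + j) := by
  let e : Fin N × ℤ ≃ ℤ := (Equiv.prodComm _ _).trans (Int.divModEquiv N).symm
  have hs : Summable (h ∘ e) := e.summable_iff.2 hh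
  have hfib (j : Fin N) : Summable fun m : ℤ ↦ h (e (j, m)) :=
    hh.comp_injective fun m m' hm ↦ by simpa [e, NeZero.ne] using hm
  rw [← e.tsum_eq, ← Function.comp_def, hs.tsum_prod' hfib, tsum_fintype,
    ← Fin.sum_univ_eq_sum_range]
  rfl

lemma SchwartzMap.summable_int_mul_add {E : Type*} [NormedAddCommGroup E] [NormedSpace ℝ E]
    [CompleteSpace E] (ψ : 𝓢(ℝ, E)) {b : ℝ} (hb : b ≠ 0) (d : ℝ) :
    Summable fun n : ℤ ↦ ψ (n * b + d) := by
  let χ : 𝓢(ℝ, E) := compCLMOfContinuousLinearEquiv ℝ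
    (ContinuousLinearEquiv.unitsEquivAut ℝ (Units.mk0 b hb)) (compSubConstCLM ℝ (-d) ψ)
  have hχ (x : ℝ) : χ x = ψ (x * b + d) := by simp [χ]
  simpa only [Function.comp_def, hχ] using
    summable_of_isBigO (Real.summable_abs_int_rpow one_lt_two)
      ((χ.isBigO_cocompact_rpow (-2)).comp_tendsto Int.tendsto_coe_cofinite)

lemma Real.fourier_comp_mul_right {E : Type*} [NormedAddCommGroup E] [NormedSpace ℂ E]
    (f : ℝ → E) {b : ℝ} (hb : b ≠ 0) (ξ : ℝ) :
    𝓕 (fun x ↦ f (x * b)) ξ = |b⁻¹| • 𝓕 f (ξ / b) := by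
  simp_rw [Real.fourier_real_eq, mul_comm _ b]
  rw [← Measure.integral_comp_mul_left _ b]
  congr with x
  field_simp

lemma SchwartzMap.fourier_fourier_apply {V E : Type*} [NormedAddCommGroup V] [InnerProductSpace ℝ V]
    [FiniteDimensional ℝ V] [MeasurableSpace V] [BorelSpace V]
    [NormedAddCommGroup E] [NormedSpace ℂ E] [CompleteSpace E] (φ : 𝓢(V, E)) (x : V) :
    𝓕 (𝓕 (φ : V → E)) x = φ (-x) := by
  have h := congrFun (fourierInv_coe (𝓕 φ)) (-x)
  rw [fourierInv_fourier_eq, fourierInv_eq_fourier_neg, neg_neg, fourier_coe] at h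
  exact h.symm

lemma Real.fourierChar_add_intCast (x : ℝ) (n : ℤ) : 𝐞 (x + n) = 𝐞 x := by
  rw [AddChar.map_add_eq_mul, Real.fourierChar_apply' n, Circle.exp_two_pi_mul_int, mul_one]

lemma SchwartzMap.tsum_fourier_add_div_eq (φ : 𝓢(ℝ, ℂ)) {a : ℝ} (ha : 0 < a) (x : ℝ) :
    ∑' m : ℤ, 𝓕 φ ((x + m) / a) = a • ∑' n : ℤ, 𝐞 (-(n * x)) • φ (n * a) := by
  let U : 𝓢(ℝ, ℂ) := compCLMOfContinuousLinearEquiv ℝ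
    (ContinuousLinearEquiv.unitsEquivAut ℝ (Units.mk0 a⁻¹ (inv_ne_zero ha.ne'))) (𝓕 φ)
  have hU (y : ℝ) : U y = 𝓕 φ (y / a) := by simp [U, div_eq_mul_inv]
  have hFU (ξ : ℝ) : 𝓕 (U : ℝ → ℂ) ξ = a • φ (-(ξ * a)) := by
    simp only [U, compCLMOfContinuousLinearEquiv_apply, Function.comp_def,
      ContinuousLinearEquiv.unitsEquivAut_apply, Units.val_mk0]
    rw [Real.fourier_comp_mul_right _ (inv_ne_zero ha.ne'), inv_inv, abs_of_pos ha, div_inv_eq_mul,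
      fourier_coe, fourier_fourier_apply]
  calc ∑' m : ℤ, 𝓕 φ ((x + m) / a) = ∑' m : ℤ, U (x + m) := by simp only [hU]
    _ = ∑' n : ℤ, 𝓕 (U : ℝ → ℂ) n * fourier n (x : UnitAddCircle) := U.tsum_eq_tsum_fourier x
    _ = ∑' n : ℤ, a • (𝐞 (-(n * x)) • φ (n * a)) := by
      rw [← (Equiv.neg ℤ).tsum_eq]
      congr with n
      rw [hFU, fourier_coe_apply, Circle.smul_def, Real.fourierChar_apply, Equiv.neg_apply]
      simp only [Complex.real_smul, smul_eq_mul]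
      push_cast
      ring_nf
    _ = a • ∑' n : ℤ, 𝐞 (-(n * x)) • φ (n * a) := tsum_const_smul'' _

lemma SchwartzMap.tsum_fourier_eq_dft (φ : 𝓢(ℝ, ℂ)) {a : ℝ} (ha : 0 < a) (N : ℕ) [NeZero N]
    (k : ℤ) :
    ∑' m : ℤ, 𝓕 φ ((m * N + k) / (a * N)) =
      a • ∑ j ∈ Finset.range N, 𝐞 (-(j * k / N)) • ∑' m : ℤ, φ (a * (m * N + j)) := by
  have hN : (N : ℝ) ≠ 0 := NeZero.ne _
  have hsum : Summable fun n : ℤ ↦ 𝐞 (-(n * (k / N))) • φ (n * a) :=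
    (φ.summable_int_mul_add ha.ne' 0).norm.of_norm_bounded fun n ↦ by simp [Circle.norm_smul]
  calc ∑' m : ℤ, 𝓕 φ ((m * N + k) / (a * N)) = ∑' m : ℤ, 𝓕 φ ((k / N + m) / a) := by
        congr with m; congr 1; field_simp; ring
    _ = a • ∑' n : ℤ, 𝐞 (-(n * (k / N))) • φ (n * a) := φ.tsum_fourier_add_div_eq ha _
    _ = _ := by
      rw [tsum_int_eq_sum_range_tsum hsum N]
      congr 1
      refine Finset.sum_congr rfl fun j _ ↦ ?_
      rw [Circle.smul_def, smul_eq_mul, ← tsum_mul_left]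
      congr with m
      have hphase : -((m * N + j : ℤ) * (k / N) : ℝ) = -(j * k / N) + (-(m * k) : ℤ) := by
        push_cast; field_simp; ring
      rw [hphase, Real.fourierChar_add_intCast, Circle.smul_def, smul_eq_mul]
      push_cast; ring_nf

noncomputable def reAddIm : ℂ →L[ℝ] ℝ := Complex.reCLM + Complex.imCLM

lemma reAddIm_fourierChar_neg_smul (θ r : ℝ) :
    reAddIm (𝐞 (-θ) • (r : ℂ)) = r * cas (2 * π * θ) := by
  simp only [reAddIm, add_apply, Complex.reCLM_apply, Complex.imCLM_apply,
    Circle.smul_def, Real.fourierChar_apply, smul_eq_mul, Complex.re_mul_ofReal,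
    Complex.im_mul_ofReal, Complex.exp_ofReal_mul_I_re, Complex.exp_ofReal_mul_I_im, cas]
  rw [mul_neg, cos_neg, sin_neg]
  ring

lemma hartley_two_pi_mul {f : ℝ → ℝ} (hf : Integrable f) (ξ : ℝ) :
    hartley f (2 * π * ξ) = (√(2 * π))⁻¹ * reAddIm (𝓕 (fun x ↦ (f x : ℂ)) ξ) := by
  have hint : Integrable fun x : ℝ ↦ 𝐞 (-(x * ξ)) • (f x : ℂ) := by
    simpa [mul_comm] using (Real.fourierIntegral_convergent_iff ξ).2 hf.ofReal
  rw [hartley, one_div, Real.fourier_real_eq, ← reAddIm.integral_comp_comm hint]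
  congr 2 with x
  rw [reAddIm_fourierChar_neg_smul]
  ring_nf

lemma SchwartzMap.tsum_hartley_eq_sum_cas (f : 𝓢(ℝ, ℝ)) {a : ℝ} (ha : 0 < a) (N : ℕ) [NeZero N]
    (k : ℤ) :
    ∑' m : ℤ, hartley f (2 * π * ((m * N + k) / (a * N))) =
      (√(2 * π))⁻¹ * (a * ∑ j ∈ Finset.range N, cas (2 * π * (j * k / N)) *
        ∑' m : ℤ, f (a * (m * N + j))) := by
  let φ : 𝓢(ℝ, ℂ) := postcompCLM Complex.ofRealCLM f
  have hsum : Summable fun m : ℤ ↦ 𝓕 φ ((m * N + k) / (a * N)) := by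
    simpa only [add_div, mul_div_assoc] using (𝓕 φ).summable_int_mul_add
      (div_ne_zero (NeZero.ne (N : ℝ)) (mul_ne_zero ha.ne' (NeZero.ne _))) ((k : ℝ) / (a * N))
  calc ∑' m : ℤ, hartley f (2 * π * ((m * N + k) / (a * N)))
      = ∑' m : ℤ, (√(2 * π))⁻¹ * reAddIm (𝓕 φ ((m * N + k) / (a * N))) := by
        simp_rw [hartley_two_pi_mul f.integrable]
        rfl
    _ = _ := by
      rw [tsum_mul_left, ← reAddIm.map_tsum hsum, φ.tsum_fourier_eq_dft ha N k, map_smul,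
        smul_eq_mul, map_sum]
      simp_rw [φ, postcompCLM_apply, Complex.ofRealCLM_apply, ← Complex.ofReal_tsum,
        reAddIm_fourierChar_neg_smul, mul_comm]

/-- Discretization intertwines the continuous and finite Hartley transforms: if
`g = 𝓗 f` with `f` Schwartz, and
`F(j) = ∑_{k ∈ ℤ} f(√(2π/N)(kN + j))`, `G(j) = ∑_{k ∈ ℤ} g(√(2π/N)(kN + j))`,
then `G(k) = (1/√N) ∑_{j<N} cas(2πkj/N) F(j)`. -/
theorem discretization_intertwines_hartley (N : ℕ) (hN : 1 ≤ N)
    (f : SchwartzMap ℝ ℝ) (g F G : ℝ → ℝ)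
    (hg : ∀ l : ℝ, g l = hartley (fun x => f x) l)
    (hF : ∀ j : ℕ, F j = ∑' k : ℤ, f (Real.sqrt (2 * Real.pi / N) * (k * N + j)))
    (hG : ∀ j : ℕ, G j = ∑' k : ℤ, g (Real.sqrt (2 * Real.pi / N) * (k * N + j))) :
    ∀ k : ℕ, k < N →
      G k = (1 / Real.sqrt N) *
        ∑ j ∈ Finset.range N, cas (2 * Real.pi * k * j / N) * F j := by
  intro k _
  have : NeZero N := ⟨by omega⟩
  set a := √(2 * π / N)
  have ha : 0 < a := by positivity
  have ha_sq : a * a * N = 2 * π := by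
    rw [Real.mul_self_sqrt (by positivity)]; field_simp
  have ha_coef : (√(2 * π))⁻¹ * a = 1 / √N := by
    rw [show a = √(2 * π) / √N from Real.sqrt_div' _ N.cast_nonneg]
    field_simp
  have hsample (m : ℤ) : a * (m * N + k) = 2 * π * ((m * N + k) / (a * N)) := by
    field_simp
    linear_combination (m * N + k) * ha_sq
  have hsampled := f.tsum_hartley_eq_sum_cas ha N k
  simp only [Int.cast_natCast] at hsampled
  simp_rw [hG, hsample, hg, hsampled, ← mul_assoc, ha_coef, hF]
  congr 1
  refine Finset.sum_congr rfl fun j _ ↦ ?_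
  ring_nf
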